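/- arXiv:2203.07637 — 3 statements merged into one kernel-verified Lean document; each statement's English description precedes it below -/
import Mathlib

section
/- Consider a sequence of independent Bernoulli trials each succeeding with probability p = k/m ∈ (0,1]. The probability of obtaining fewer than r successes in N = (2m/k)(r + 2 + log(1/ε)) trials is at most ε. -/
open Finset

private lemma card_lt_filter (m k : ℕ) (h : k ≤ m) :
    (Finset.univ.filter fun x : Fin m => (x : ℕ) < k).card = k := by
  rcases eq_or_lt_of_le h with rfl | h
  · rw [Finset.filter_true_of_mem (fun x _ => x.is_lt), Finset.card_univ, Fintype.card_fin]
  · have : (Finset.univ.filter fun x : Fin m => (x : ℕ) < k) = Finset.Iio ⟨k, h⟩ := by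
      ext x; simp [Fin.lt_iff_val_lt_val]
    rw [this, Fin.card_Iio]

private lemma card_ge_filter (m k : ℕ) (h : k ≤ m) :
    (Finset.univ.filter fun x : Fin m => ¬ (x : ℕ) < k).card = m - k := by
  have h2 := Finset.card_filter_add_card_filter_not (s := (Finset.univ : Finset (Fin m)))
    (p := fun x : Fin m => (x : ℕ) < k)
  rw [card_lt_filter m k h, Finset.card_univ, Fintype.card_fin] at h2
  omega

private lemma count_exact {m k N : ℕ} (hkm : k ≤ m) (s : Finset (Fin N)) :
    (Finset.univ.filter fun f : Fin N → Fin m =>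
        (Finset.univ.filter fun t => (f t : ℕ) < k) = s).card
      = k ^ s.card * (m - k) ^ (N - s.card) := by
  classical
  have hset : (Finset.univ.filter fun f : Fin N → Fin m =>
        (Finset.univ.filter fun t => (f t : ℕ) < k) = s)
      = Fintype.piFinset (fun t : Fin N =>
          if t ∈ s then Finset.univ.filter (fun x : Fin m => (x : ℕ) < k)
          else Finset.univ.filter (fun x : Fin m => ¬ (x : ℕ) < k)) := by
    ext f
    simp only [mem_filter, mem_univ, true_and, Fintype.mem_piFinset, Finset.ext_iff]
    constructor
    · intro h t
      have ht2 := h t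
      by_cases ht : t ∈ s
      · simp only [ht, if_pos, mem_filter, mem_univ, true_and]
        tauto
      · simp only [ht, if_neg, mem_filter, mem_univ, true_and, not_false_iff]
        tauto
    · intro h t
      have ht2 := h t
      by_cases ht : t ∈ s <;>
        simp only [ht, if_pos, if_neg, not_false_iff, mem_filter, mem_univ, true_and] at ht2 <;>
        simp [ht, ht2]
  rw [hset, Fintype.card_piFinset]
  simp only [apply_ite Finset.card, card_lt_filter m k hkm, card_ge_filter m k hkm]
  rw [Finset.prod_ite, Finset.prod_const, Finset.prod_const]
  congr 1
  · congr 1; rw [Finset.filter_mem_eq_inter, Finset.univ_inter]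
  · congr 1
    have : Finset.univ.filter (fun t => t ∉ s) = sᶜ := by ext t; simp
    rw [this, Finset.card_compl, Fintype.card_fin]

/-- Consider `N` independent Bernoulli trials, each succeeding with probability
`p = k/m ∈ (0,1]` (modeled by a uniform sample `f : Fin N → Fin m`, trial `t` succeeding
iff `f t < k`). If `N ≥ (2m/k)(r + 2 + log(1/ε))`, then the probability of obtaining
fewer than `r` successes is at most `ε`. -/
theorem prob_few_successes_le
    {m k r N : ℕ} (hk : 1 ≤ k) (hkm : k ≤ m) (hr : 1 ≤ r)
    {ε : ℝ} (hε0 : 0 < ε) (hε1 : ε < 1)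
    (hN : 2 * (m : ℝ) / k * (r + 2 + Real.log (1 / ε)) ≤ N) :
    ((Finset.univ.filter fun f : Fin N → Fin m =>
        (Finset.univ.filter fun t : Fin N => (f t : ℕ) < k).card < r).card : ℝ) /
      (Fintype.card (Fin N → Fin m)) ≤ ε := by
  classical
  have hm : 1 ≤ m := le_trans hk hkm
  have hk0 : (0:ℝ) < k := by exact_mod_cast hk
  have hm0 : (0:ℝ) < m := by exact_mod_cast hm
  have hkm' : (k:ℝ) ≤ m := by exact_mod_cast hkm
  -- counting bound
  have hP : True := trivial
  have hsubset : (Finset.univ.filter fun f : Fin N → Fin m =>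
        (Finset.univ.filter fun t : Fin N => (f t : ℕ) < k).card < r)
      ⊆ (Finset.univ.powerset.filter (fun u : Finset (Fin N) => u.card < r)).biUnion (fun s => Finset.univ.filter fun f : Fin N → Fin m =>
        (Finset.univ.filter fun t => (f t : ℕ) < k) = s) := by
    intro f hf
    simp only [mem_filter, mem_univ, true_and] at hf
    simp only [mem_biUnion, mem_filter, mem_powerset, mem_univ, true_and]
    exact ⟨_, ⟨Finset.subset_univ _, hf⟩, rfl⟩
  have hcard : (Finset.univ.filter fun f : Fin N → Fin m =>
        (Finset.univ.filter fun t : Fin N => (f t : ℕ) < k).card < r).card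
      ≤ ∑ s ∈ (Finset.univ.powerset.filter (fun u : Finset (Fin N) => u.card < r)), k ^ s.card * (m - k) ^ (N - s.card) := by
    calc _ ≤ ((Finset.univ.powerset.filter (fun u : Finset (Fin N) => u.card < r)).biUnion (fun s => Finset.univ.filter fun f : Fin N → Fin m =>
        (Finset.univ.filter fun t => (f t : ℕ) < k) = s)).card :=
          Finset.card_le_card hsubset
      _ ≤ ∑ s ∈ (Finset.univ.powerset.filter (fun u : Finset (Fin N) => u.card < r)), (Finset.univ.filter fun f : Fin N → Fin m =>
        (Finset.univ.filter fun t => (f t : ℕ) < k) = s).card := Finset.card_biUnion_le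
      _ = ∑ s ∈ (Finset.univ.powerset.filter (fun u : Finset (Fin N) => u.card < r)), k ^ s.card * (m - k) ^ (N - s.card) := by
          exact Finset.sum_congr rfl (fun s _ => count_exact hkm s)
  -- real bound
  have hmk : (0:ℝ) ≤ (m:ℝ) - k := by linarith
  have hterm : ∀ s ∈ (Finset.univ.powerset.filter (fun u : Finset (Fin N) => u.card < r)), ((k:ℝ) ^ s.card * ((m:ℝ) - k) ^ (N - s.card))
      ≤ 2 ^ (r-1) * (((k:ℝ)/2) ^ s.card * ((m:ℝ) - k) ^ (N - s.card)) := by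
    intro s hs
    have hsr : s.card ≤ r - 1 := Nat.le_pred_of_lt (Finset.mem_filter.mp hs).2
    have h1 : (k:ℝ) ^ s.card = 2 ^ s.card * ((k:ℝ)/2) ^ s.card := by
      rw [← mul_pow]; ring_nf
    have h2 : (2:ℝ) ^ s.card ≤ 2 ^ (r-1) := by
      apply pow_le_pow_right₀ (by norm_num) hsr
    rw [h1, mul_assoc]
    apply mul_le_mul_of_nonneg_right h2
    positivity
  have hsum2 : ∑ s ∈ (Finset.univ.powerset.filter (fun u : Finset (Fin N) => u.card < r)), (((k:ℝ)/2) ^ s.card * ((m:ℝ) - k) ^ (N - s.card))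
      ≤ ((m:ℝ) - k/2) ^ N := by
    have hall : ∑ s ∈ (Finset.univ : Finset (Fin N)).powerset,
        (((k:ℝ)/2) ^ s.card * ((m:ℝ) - k) ^ (N - s.card)) = ((m:ℝ) - k/2) ^ N := by
      have := Finset.prod_add (fun _ : Fin N => (k:ℝ)/2) (fun _ => (m:ℝ) - k) Finset.univ
      rw [Finset.prod_const] at this
      rw [Finset.card_univ, Fintype.card_fin] at this
      rw [show (m:ℝ) - k/2 = (k:ℝ)/2 + ((m:ℝ) - k) by ring, this]
      refine Finset.sum_congr rfl (fun s hs => ?_)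
      rw [Finset.prod_const, Finset.prod_const, Finset.card_sdiff_of_subset (Finset.subset_univ s),
        Finset.card_univ, Fintype.card_fin]
    rw [← hall]
    apply Finset.sum_le_sum_of_subset_of_nonneg
    · exact Finset.filter_subset _ _
    · intro s _ _; positivity
  have hmain : ((Finset.univ.filter fun f : Fin N → Fin m =>
        (Finset.univ.filter fun t : Fin N => (f t : ℕ) < k).card < r).card : ℝ)
      ≤ 2 ^ (r-1) * ((m:ℝ) - k/2) ^ N := by
    calc ((Finset.univ.filter fun f : Fin N → Fin m =>
        (Finset.univ.filter fun t : Fin N => (f t : ℕ) < k).card < r).card : ℝ)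
        ≤ ((∑ s ∈ (Finset.univ.powerset.filter (fun u : Finset (Fin N) => u.card < r)), k ^ s.card * (m - k) ^ (N - s.card) : ℕ) : ℝ) := by exact_mod_cast hcard
      _ = ∑ s ∈ (Finset.univ.powerset.filter (fun u : Finset (Fin N) => u.card < r)), ((k:ℝ) ^ s.card * ((m:ℝ) - k) ^ (N - s.card)) := by
          push_cast [Nat.cast_sub hkm]; ring_nf
      _ ≤ ∑ s ∈ (Finset.univ.powerset.filter (fun u : Finset (Fin N) => u.card < r)), 2 ^ (r-1) * (((k:ℝ)/2) ^ s.card * ((m:ℝ) - k) ^ (N - s.card)) :=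
          Finset.sum_le_sum hterm
      _ = 2 ^ (r-1) * ∑ s ∈ (Finset.univ.powerset.filter (fun u : Finset (Fin N) => u.card < r)), (((k:ℝ)/2) ^ s.card * ((m:ℝ) - k) ^ (N - s.card)) :=
          by rw [Finset.mul_sum]
      _ ≤ 2 ^ (r-1) * ((m:ℝ) - k/2) ^ N := by
          apply mul_le_mul_of_nonneg_left hsum2 (by positivity)
  -- analytic part
  set p : ℝ := (k:ℝ) / m with hp
  have hp0 : 0 < p := by positivity
  have hp1 : p ≤ 1 := by rw [hp, div_le_one hm0]; exact hkm'
  have hexp : ((m:ℝ) - k/2) ^ N ≤ (m:ℝ) ^ N * Real.exp (-(p/2) * N) := by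
    have h1 : (m:ℝ) - k/2 = m * (1 - p/2) := by rw [hp]; field_simp
    have h2 : (0:ℝ) ≤ 1 - p/2 := by linarith
    have h3 : 1 - p/2 ≤ Real.exp (-(p/2)) := by
      have := Real.add_one_le_exp (-(p/2)); linarith
    rw [h1, mul_pow]
    apply mul_le_mul_of_nonneg_left _ (by positivity)
    calc (1 - p/2) ^ N ≤ (Real.exp (-(p/2))) ^ N := pow_le_pow_left₀ h2 h3 N
      _ = Real.exp ((N : ℕ) * (-(p/2))) := (Real.exp_nat_mul _ N).symm
      _ = Real.exp (-(p/2) * N) := by rw [mul_comm]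
  -- the key numeric inequality
  have hNp : (r:ℝ) + 2 + Real.log (1/ε) ≤ p/2 * N := by
    have h1 : 2 * (m:ℝ) * ((r:ℝ) + 2 + Real.log (1/ε)) ≤ N * k := by
      have := mul_le_mul_of_nonneg_right hN hk0.le
      rw [div_mul_eq_mul_div, mul_comm, ← div_mul_eq_mul_div] at this
      calc 2 * (m:ℝ) * ((r:ℝ) + 2 + Real.log (1/ε))
          = 2 * (m:ℝ) * ((r:ℝ) + 2 + Real.log (1/ε)) / k * k := by field_simp
        _ ≤ N * k := by
            apply mul_le_mul_of_nonneg_right _ hk0.le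
            rw [div_le_iff₀ hk0]
            calc 2 * (m:ℝ) * ((r:ℝ) + 2 + Real.log (1/ε))
                = 2 * (m:ℝ) / k * ((r:ℝ) + 2 + Real.log (1/ε)) * k := by field_simp
              _ ≤ N * k := mul_le_mul_of_nonneg_right hN hk0.le
    rw [hp]
    rw [div_div, div_mul_eq_mul_div, le_div_iff₀ (by positivity)]
    nlinarith
  have hlog : Real.log (1/ε) = - Real.log ε := by
    rw [one_div, Real.log_inv]
  have h2e : (2:ℝ) ^ (r-1) ≤ Real.exp ((r:ℝ) - 1) := by
    have h1 : (2:ℝ) ^ (r-1) ≤ Real.exp 1 ^ (r-1) :=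
      pow_le_pow_left₀ (by norm_num) (by have := Real.exp_one_gt_d9; linarith) _
    have h2 : Real.exp 1 ^ (r-1) = Real.exp (((r-1:ℕ):ℝ)) := by
      rw [← Real.exp_nat_mul, mul_one]
    have h3 : ((r-1:ℕ):ℝ) = (r:ℝ) - 1 := by
      push_cast [Nat.cast_sub hr]; ring
    rw [h2, h3] at h1
    exact h1
  have hfinal : (2:ℝ) ^ (r-1) * ((m:ℝ) - k/2) ^ N ≤ ε * (m:ℝ) ^ N := by
    calc (2:ℝ) ^ (r-1) * ((m:ℝ) - k/2) ^ N
        ≤ Real.exp ((r:ℝ) - 1) * ((m:ℝ) ^ N * Real.exp (-(p/2) * N)) := by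
          exact mul_le_mul h2e hexp (pow_nonneg (by linarith) N) (by positivity)
      _ = (m:ℝ) ^ N * Real.exp ((r:ℝ) - 1 + -(p/2) * N) := by
          rw [Real.exp_add]; ring
      _ ≤ (m:ℝ) ^ N * ε := by
          apply mul_le_mul_of_nonneg_left _ (by positivity)
          rw [← Real.exp_log hε0]
          apply Real.exp_le_exp.mpr
          rw [hlog] at hNp
          linarith
      _ = ε * (m:ℝ) ^ N := by ring
  have hcardfun : (Fintype.card (Fin N → Fin m) : ℝ) = (m:ℝ) ^ N := by
    simp [Fintype.card_fun]
  rw [hcardfun, div_le_iff₀ (by positivity)]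
  calc ((Finset.univ.filter fun f : Fin N → Fin m =>
        (Finset.univ.filter fun t : Fin N => (f t : ℕ) < k).card < r).card : ℝ)
      ≤ 2 ^ (r-1) * ((m:ℝ) - k/2) ^ N := hmain
    _ ≤ ε * (m:ℝ) ^ N := hfinal
end

section
/- For an m×n rank-r matrix M with column space U of nonsparsity-number ψ(U) = k, the coherence satisfies μ(U) ≥ m/(k r); equivalently, k ≥ m/(μ(U) r). -/
/-!
A unit vector `x ∈ U` with `k` nonzero coordinates satisfies
`1 = ∑_{j ∈ supp x} ⟪x, e_j⟫² = ∑_{j ∈ supp x} ⟪x, P_U e_j⟫² ≤ k · max_j ‖P_U e_j‖²`,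
so the largest leverage score `max_j ‖P_U e_j‖²` is at least `1 / k`.
-/

open Finset

theorem Submodule.abs_real_inner_le_norm_mul_norm_orthogonalProjectionOnto {E : Type*}
    [NormedAddCommGroup E] [InnerProductSpace ℝ E] (K : Submodule ℝ E) [K.HasOrthogonalProjection]
    {x : E} (hx : x ∈ K) (v : E) :
    |inner ℝ x v| ≤ ‖x‖ * ‖K.orthogonalProjectionOnto v‖ := by
  rw [← K.inner_orthogonalProjectionOnto_eq_of_mem_left ⟨x, hx⟩ v]
  exact abs_real_inner_le_norm _ _

namespace EuclideanSpace

variable {ι : Type*} [Fintype ι] [DecidableEq ι] (U : Submodule ℝ (EuclideanSpace ℝ ι))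
  {x : EuclideanSpace ℝ ι}

/-- `max_j ‖P_U e_j‖²`; the coherence of the paper is `μ(U) = (m / r) · maxLeverageScore U`. -/
noncomputable def maxLeverageScore : ℝ :=
  ⨆ j, ‖(U.orthogonalProjectionOnto (single j (1 : ℝ)) : EuclideanSpace ℝ ι)‖ ^ 2

theorem sq_norm_orthogonalProjectionOnto_single_le_maxLeverageScore (j : ι) :
    ‖U.orthogonalProjectionOnto (single j (1 : ℝ))‖ ^ 2 ≤ maxLeverageScore U :=
  le_ciSup (f := fun j => ‖(U.orthogonalProjectionOnto (single j (1 : ℝ)) :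
    EuclideanSpace ℝ ι)‖ ^ 2) (Finite.bddAbove_range _) j

theorem maxLeverageScore_nonneg : 0 ≤ maxLeverageScore U :=
  Real.iSup_nonneg fun _ => by positivity

theorem sq_apply_le_norm_sq_mul_maxLeverageScore (hx : x ∈ U) (j : ι) :
    x j ^ 2 ≤ ‖x‖ ^ 2 * maxLeverageScore U := by
  have h := U.abs_real_inner_le_norm_mul_norm_orthogonalProjectionOnto hx (single j 1)
  rw [inner_single_right, one_mul, conj_trivial] at h
  calc x j ^ 2 ≤ (‖x‖ * ‖U.orthogonalProjectionOnto (single j (1 : ℝ))‖) ^ 2 := by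
        rw [← sq_abs]
        exact pow_le_pow_left₀ (abs_nonneg _) h 2
    _ ≤ ‖x‖ ^ 2 * maxLeverageScore U := by
        rw [mul_pow]
        gcongr
        exact sq_norm_orthogonalProjectionOnto_single_le_maxLeverageScore U j

theorem norm_sq_le_card_support_mul_maxLeverageScore (hx : x ∈ U) :
    ‖x‖ ^ 2 ≤ #{j | x j ≠ 0} * (‖x‖ ^ 2 * maxLeverageScore U) := by
  calc ‖x‖ ^ 2 = ∑ j with x j ≠ 0, x j ^ 2 := by
        rw [real_norm_sq_eq, sum_filter_of_ne fun j _ hj => by simpa using hj]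
    _ ≤ ∑ j with x j ≠ 0, ‖x‖ ^ 2 * maxLeverageScore U := by
        gcongr with j
        exact sq_apply_le_norm_sq_mul_maxLeverageScore U hx j
    _ = _ := by rw [sum_const, nsmul_eq_mul]

theorem inv_card_support_le_maxLeverageScore (hx : x ∈ U) (hx0 : x ≠ 0) :
    (#{j | x j ≠ 0} : ℝ)⁻¹ ≤ maxLeverageScore U := by
  have h := norm_sq_le_card_support_mul_maxLeverageScore U hx
  rw [mul_left_comm, le_mul_iff_one_le_right (by positivity)] at h
  have hcard : 0 < (#{j | x j ≠ 0} : ℝ) :=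
    Nat.cast_pos.mpr (Nat.pos_of_ne_zero fun h0 => by norm_num [h0] at h)
  rwa [inv_le_iff_one_le_mul₀' hcard]

end EuclideanSpace

theorem coherence_ge_of_nonsparsity_general
    {m r k : ℕ} (U : Submodule ℝ (EuclideanSpace ℝ (Fin m)))
    (hk : sInf {c : ℕ | ∃ x ∈ U, x ≠ 0 ∧
        c = (Finset.univ.filter fun j => x j ≠ 0).card} = k) :
    (m : ℝ) / (k * r) ≤
      (m / r : ℝ) *
        (⨆ j : Fin m,
          ‖(U.orthogonalProjection (EuclideanSpace.single j (1 : ℝ)) :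
              EuclideanSpace ℝ (Fin m))‖ ^ 2) := by
  rcases Nat.eq_zero_or_pos k with rfl | hk0
  · simp only [CharP.cast_eq_zero, zero_mul, div_zero]
    exact mul_nonneg (by positivity) (EuclideanSpace.maxLeverageScore_nonneg U)
  -- `k > 0` rules out `sInf ∅ = 0`, so `k` is attained by a sparsest nonzero vector.
  obtain ⟨x, hxU, hx0, rfl⟩ := hk ▸ Nat.sInf_mem (Nat.nonempty_of_pos_sInf (hk ▸ hk0))
  rw [mul_comm, ← div_div, div_eq_mul_inv]
  gcongr
  exact EuclideanSpace.inv_card_support_le_maxLeverageScore U hxU hx0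

/-- For an `r`-dimensional subspace `U ⊆ ℝ^m` (e.g. the column space of a rank-`r`
matrix) with nonsparsity-number `ψ(U) = k`, the coherence
`μ(U) = (m/r)·max_j ‖P_U e_j‖²` satisfies `μ(U) ≥ m/(k r)`. -/
theorem coherence_ge_of_nonsparsity
    {m r k : ℕ} (hr : 1 ≤ r) (U : Submodule ℝ (EuclideanSpace ℝ (Fin m)))
    (hU : Module.finrank ℝ U = r)
    (hk : sInf {c : ℕ | ∃ x ∈ U, x ≠ 0 ∧
        c = (Finset.univ.filter fun j => x j ≠ 0).card} = k) :
    (m : ℝ) / (k * r) ≤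
      (m / r : ℝ) *
        (⨆ j : Fin m,
          ‖(U.orthogonalProjection (EuclideanSpace.single j (1 : ℝ)) :
              EuclideanSpace ℝ (Fin m))‖ ^ 2) :=
  coherence_ge_of_nonsparsity_general U hk
end

section
/- If the m×n matrix M has rank r and its row space V satisfies ψ(V) ≥ t (every nonzero vector of the row space has at least t nonzero coordinates), then whenever there exists a column of M not contained in the span of a given set of columns spanning a proper subspace of the column space, there exist at least t such columns. -/
/-! A linear functional that vanishes on `U'` but not on some column, evaluated on the columns of
`M`, is a nonzero vector of the row space; its support consists of columns outside `U'`. -/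

open Submodule Set
open scoped Matrix

theorem Matrix.apply_transpose_eq_vecMul {m n R : Type*} [CommSemiring R] [Fintype m]
    [DecidableEq m] (M : Matrix m n R) (f : (m → R) →ₗ[R] R) (j : n) :
    f (Mᵀ j) = ((fun i => f (Pi.single i 1)) ᵥ* M) j := by
  conv_lhs => rw [pi_eq_sum_univ' (Mᵀ j)]
  simp [Matrix.vecMul, dotProduct, mul_comm]

theorem Matrix.apply_transpose_mem_span_range {m n R : Type*} [CommSemiring R] [Fintype m]
    (M : Matrix m n R) (f : (m → R) →ₗ[R] R) :
    (fun j => f (Mᵀ j)) ∈ span R (range M) := by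
  classical
  rw [funext (M.apply_transpose_eq_vecMul f)]
  exact range_vecMulLinear M ▸ LinearMap.mem_range_self M.vecMulLinear _

theorem Submodule.exists_dual_le_ker_ne_zero_of_lt_span {K V : Type*} [Field K] [AddCommGroup V]
    [Module K V] {U : Submodule K V} {s : Set V} (h : U < span K s) :
    ∃ f : Module.Dual K V, U ≤ LinearMap.ker f ∧ ∃ v ∈ s, f v ≠ 0 := by
  obtain ⟨v, hvs, hvU⟩ : ∃ v ∈ s, v ∉ U := by
    by_contra! hs
    exact h.not_ge (span_le.mpr hs)
  obtain ⟨f, hfv, hfU⟩ := U.exists_dual_map_eq_bot_of_notMem hvU inferInstance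
  exact ⟨f, LinearMap.le_ker_iff_map.mpr hfU, v, hvs, hfv⟩

open scoped Classical in
theorem num_active_columns_ge_general
    {m n t : ℕ} (M : Matrix (Fin m) (Fin n) ℝ)
    (hrow : ∀ x ∈ Submodule.span ℝ (Set.range M), x ≠ 0 →
      t ≤ (Finset.univ.filter fun j => x j ≠ 0).card)
    (U' : Submodule ℝ (Fin m → ℝ))
    (hU' : U' < Submodule.span ℝ (Set.range M.transpose)) :
    t ≤ (Finset.univ.filter fun j : Fin n => (fun i => M i j) ∉ U').card := by
  obtain ⟨f, hUf, _, ⟨j₀, rfl⟩, hfj₀⟩ := exists_dual_le_ker_ne_zero_of_lt_span hU'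
  have hne : (fun j => f (Mᵀ j)) ≠ 0 := fun h => hfj₀ (congrFun h j₀)
  refine (hrow _ (M.apply_transpose_mem_span_range f) hne).trans (Finset.card_le_card ?_)
  intro j hj
  simp only [Finset.mem_filter, Finset.mem_univ, true_and] at hj ⊢
  exact fun hjU => hj (hUf hjU)

open scoped Classical in
/-- Let `M` be an `m×n` matrix of rank `r` whose row space `V` satisfies `ψ(V) ≥ t`
(every nonzero vector of the span of the rows has at least `t` nonzero coordinates).
If `U'` is a proper subspace of the column space of `M` (so some column lies outside
`U'`), then there are at least `t` columns of `M` not contained in `U'`. -/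
theorem num_active_columns_ge
    {m n r t : ℕ} (M : Matrix (Fin m) (Fin n) ℝ) (hrank : M.rank = r)
    (hrow : ∀ x ∈ Submodule.span ℝ (Set.range M), x ≠ 0 →
      t ≤ (Finset.univ.filter fun j => x j ≠ 0).card)
    (U' : Submodule ℝ (Fin m → ℝ))
    (hU' : U' < Submodule.span ℝ (Set.range M.transpose)) :
    t ≤ (Finset.univ.filter fun j : Fin n => (fun i => M i j) ∉ U').card :=
  num_active_columns_ge_general M hrow U' hU'
end
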